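/- Suppose F satisfies the genus-0 topological recursion relation: for m > 0, ⟨⟨τ_m(O_α) τ_n(O_β) τ_k(O_γ)⟩⟩ = Σ_{σ,ρ} ⟨⟨τ_{m-1}(O_α) O_σ⟩⟩ η^{σρ} ⟨⟨O_ρ τ_n(O_β) τ_k(O_γ)⟩⟩, where ⟨⟨⋯⟩⟩ denotes the corresponding iterated partial derivative of F and O_σ := τ_0(O_σ). Then F satisfies the generalized WDVV equation: for all m,n,k,l ≥ 0 and all α,β,μ,ν, Σ_{σ,ρ} ⟨⟨τ_m(O_α) τ_n(O_β) O_σ⟩⟩ η^{σρ} ⟨⟨O_ρ τ_k(O_μ) τ_l(O_ν)⟩⟩ = Σ_{σ,ρ} ⟨⟨τ_m(O_α) τ_k(O_μ) O_σ⟩⟩ η^{σρ} ⟨⟨O_ρ τ_n(O_β) τ_l(O_ν)⟩⟩. -/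
import Mathlib


/-- Genus-0 topological recursion relation implies the generalized WDVV equation. -/
theorem trr_implies_wdvv
    {R : Type*} [CommRing R] [Algebra ℚ R] {N : ℕ}
    (d : Fin N → ℤ → Derivation ℚ R R)
    (η ηinv : Fin N → Fin N → ℚ)
    (F : R)
    (hηsymm : ∀ α β, η α β = η β α)
    (hηinv : ∀ α β, (∑ γ, η α γ * ηinv γ β) = if α = β then 1 else 0)
    (hdcomm : ∀ (α β : Fin N) (m n : ℤ) (f : R), d α m (d β n f) = d β n (d α m f))
    (htrr : ∀ (α β γ : Fin N) (m n k : ℤ), 0 < m →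
      d α m (d β n (d γ k F))
        = ∑ σ, ∑ ρ, ηinv σ ρ • (d α (m - 1) (d σ 0 F) * d ρ 0 (d β n (d γ k F)))) :
    ∀ (α β μ ν : Fin N) (m n k l : ℕ),
      ∑ σ, ∑ ρ, ηinv σ ρ •
          (d α (m : ℤ) (d β (n : ℤ) (d σ 0 F)) * d ρ 0 (d μ (k : ℤ) (d ν (l : ℤ) F)))
        = ∑ σ, ∑ ρ, ηinv σ ρ •
          (d α (m : ℤ) (d μ (k : ℤ) (d σ 0 F)) * d ρ 0 (d β (n : ℤ) (d ν (l : ℤ) F))) := by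
  intro α β μ ν m n k l
  have h1 := htrr α μ ν ((m : ℤ) + 1) k l (by positivity)
  have h2 := htrr α β ν ((m : ℤ) + 1) n l (by positivity)
  simp only [add_sub_cancel_right] at h1 h2
  -- differentiate h1 by d β n, h2 by d μ k
  have e1 : d β (n : ℤ) (d α ((m : ℤ) + 1) (d μ (k : ℤ) (d ν (l : ℤ) F)))
      = (∑ σ, ∑ ρ, ηinv σ ρ •
            (d β (n : ℤ) (d α (m : ℤ) (d σ 0 F)) * d ρ 0 (d μ (k : ℤ) (d ν (l : ℤ) F))))
        + ∑ σ, ∑ ρ, ηinv σ ρ •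
            (d α (m : ℤ) (d σ 0 F) * d β (n : ℤ) (d ρ 0 (d μ (k : ℤ) (d ν (l : ℤ) F)))) := by
    rw [h1]
    simp only [map_sum, Derivation.map_smul, Derivation.leibniz, smul_eq_mul, smul_add,
      Finset.sum_add_distrib]
    rw [add_comm]
    congr 1 <;> exact Finset.sum_congr rfl fun σ _ => Finset.sum_congr rfl fun ρ _ => by
      rw [mul_comm]
  have e2 : d μ (k : ℤ) (d α ((m : ℤ) + 1) (d β (n : ℤ) (d ν (l : ℤ) F)))
      = (∑ σ, ∑ ρ, ηinv σ ρ •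
            (d μ (k : ℤ) (d α (m : ℤ) (d σ 0 F)) * d ρ 0 (d β (n : ℤ) (d ν (l : ℤ) F))))
        + ∑ σ, ∑ ρ, ηinv σ ρ •
            (d α (m : ℤ) (d σ 0 F) * d μ (k : ℤ) (d ρ 0 (d β (n : ℤ) (d ν (l : ℤ) F)))) := by
    rw [h2]
    simp only [map_sum, Derivation.map_smul, Derivation.leibniz, smul_eq_mul, smul_add,
      Finset.sum_add_distrib]
    rw [add_comm]
    congr 1 <;> exact Finset.sum_congr rfl fun σ _ => Finset.sum_congr rfl fun ρ _ => by
      rw [mul_comm]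
  -- the two differentiated left-hand sides agree
  have hL : d β (n : ℤ) (d α ((m : ℤ) + 1) (d μ (k : ℤ) (d ν (l : ℤ) F)))
      = d μ (k : ℤ) (d α ((m : ℤ) + 1) (d β (n : ℤ) (d ν (l : ℤ) F))) := by
    rw [hdcomm β α, hdcomm β μ, hdcomm α μ]
  -- the second sums agree
  have hT : (∑ σ, ∑ ρ, ηinv σ ρ •
        (d α (m : ℤ) (d σ 0 F) * d β (n : ℤ) (d ρ 0 (d μ (k : ℤ) (d ν (l : ℤ) F)))))
      = ∑ σ, ∑ ρ, ηinv σ ρ •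
        (d α (m : ℤ) (d σ 0 F) * d μ (k : ℤ) (d ρ 0 (d β (n : ℤ) (d ν (l : ℤ) F)))) := by
    refine Finset.sum_congr rfl fun σ _ => Finset.sum_congr rfl fun ρ _ => ?_
    rw [hdcomm β ρ, hdcomm β μ, hdcomm ρ μ]
  -- rewrite goal's LHS inner derivative order to match e1
  have hG : (∑ σ, ∑ ρ, ηinv σ ρ •
        (d α (m : ℤ) (d β (n : ℤ) (d σ 0 F)) * d ρ 0 (d μ (k : ℤ) (d ν (l : ℤ) F))))
      = ∑ σ, ∑ ρ, ηinv σ ρ •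
        (d β (n : ℤ) (d α (m : ℤ) (d σ 0 F)) * d ρ 0 (d μ (k : ℤ) (d ν (l : ℤ) F))) := by
    refine Finset.sum_congr rfl fun σ _ => Finset.sum_congr rfl fun ρ _ => ?_
    rw [hdcomm α β]
  have hG2 : (∑ σ, ∑ ρ, ηinv σ ρ •
        (d α (m : ℤ) (d μ (k : ℤ) (d σ 0 F)) * d ρ 0 (d β (n : ℤ) (d ν (l : ℤ) F))))
      = ∑ σ, ∑ ρ, ηinv σ ρ •
        (d μ (k : ℤ) (d α (m : ℤ) (d σ 0 F)) * d ρ 0 (d β (n : ℤ) (d ν (l : ℤ) F))) := by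
    refine Finset.sum_congr rfl fun σ _ => Finset.sum_congr rfl fun ρ _ => ?_
    rw [hdcomm α μ]
  rw [hG, hG2]
  linear_combination e2 - e1 + hL - hT
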